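/- arXiv:1308.5425 — 2 statements merged into one kernel-verified Lean document; each statement's English description precedes it below -/
import Mathlib

section
/- Let X and Y be Hilbert spaces with Y ⊆ X and ‖y‖_X ≤ ‖y‖_Y for all y ∈ Y. Let L be a closed symmetric operator on X with dense domain D(L), Y ⊆ D(L) ⊆ X. Let π₀ be the orthogonal projection onto ker L and π₁ = Id - π₀. Suppose there is an operator Q : (ker L)^⊥ → Y ∩ (ker L)^⊥ with L Q π₁ = π₁ and ‖Q π₁ x‖_Y ≤ C ‖x‖_X for all x. Then there exists ε > 0 such that L - μ·Id : D(L) → X is bijective for all real μ with 0 < |μ| < ε, and consequently (L, D(L)) is self-adjoint. -/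
open InnerProductSpace

local notation "⟪" x ", " y "⟫" => @inner ℂ _ _ x y

/-! Let `R = ι Q π₁`, a bounded operator with `L R = π₁` and range in `D(L) ∩ (ker L)ᗮ`.
For real `μ ≠ 0` with `|μ| ‖R‖ < 1`, the equation `(L - μ) u = x` is solved by
`u = R w - μ⁻¹ π₀ x` with `w = (1 - μ R)⁻¹ π₁ x` (a Neumann series), while an eigenvector `u`
of `L` for `μ` lies in `(ker L)ᗮ`, hence satisfies `u = R L u = μ R u` and vanishes.
Self-adjointness follows since `L ⊆ L*` and, `L - μ` being onto, `L* - μ` is injective. -/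

namespace LinearPMap

section Algebra

variable {R E : Type*} [Ring R] [AddCommGroup E] [Module R E]

theorem eq_of_le_of_surjective_of_injective {S S' : E →ₗ.[R] E} (h : S ≤ S') (μ : R)
    (hS : Function.Surjective fun x : S.domain => S x - μ • (x : E))
    (hS' : Function.Injective fun y : S'.domain => S' y - μ • (y : E)) : S = S' := by
  refine eq_of_le_of_domain_eq h (le_antisymm h.1 fun y hy => ?_)
  obtain ⟨x, hx⟩ := hS (S' ⟨y, hy⟩ - μ • y)
  have hxy : (⟨x, h.1 x.2⟩ : S'.domain) = ⟨y, hy⟩ := hS' <| by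
    simp only [hx, ← h.2 (x := x) (y := ⟨x, h.1 x.2⟩) rfl]
  rw [show y = x from congrArg Subtype.val hxy.symm]
  exact x.2

end Algebra

section InnerProduct

variable {𝕜 E : Type*} [RCLike 𝕜] [NormedAddCommGroup E] [InnerProductSpace 𝕜 E]
  {T : E →ₗ.[𝕜] E}

theorem adjoint_sub_smul_injective [CompleteSpace E] (hT : Dense (T.domain : Set E)) (μ : 𝕜)
    (h : Function.Surjective fun x : T.domain => T x - (starRingEnd 𝕜) μ • (x : E)) :
    Function.Injective fun y : T†.domain => T† y - μ • (y : E) := by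
  refine (injective_iff_map_eq_zero (T†.toFun - μ • T†.domain.subtype)).2 fun y hy => ?_
  obtain ⟨x, hx⟩ := h y
  have hTy : T† y = μ • (y : E) := sub_eq_zero.1 hy
  have : ⟪(y : E), y⟫_𝕜 = 0 := by
    rw [← congrArg (⟪·, (y : E)⟫_𝕜) hx]
    dsimp only
    rw [inner_sub_left, inner_smul_left, RCLike.conj_conj, (adjoint_isFormalAdjoint hT).symm x y,
      hTy, inner_smul_right, sub_self]
  exact Subtype.ext (inner_self_eq_zero.1 this)

theorem isSelfAdjoint_of_surjective_sub_smul [CompleteSpace E] (hT : Dense (T.domain : Set E))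
    (hsym : T.IsFormalAdjoint T) (μ : ℝ)
    (h : Function.Surjective fun x : T.domain => T x - (μ : 𝕜) • (x : E)) : IsSelfAdjoint T :=
  (eq_of_le_of_surjective_of_injective (hsym.le_adjoint hT) μ h
    (adjoint_sub_smul_injective hT μ (by simpa only [RCLike.conj_ofReal] using h))).symm

def ker (T : E →ₗ.[𝕜] E) : Submodule 𝕜 E :=
  (LinearMap.ker T.toFun).map T.domain.subtype

theorem mem_ker_iff {z : E} : z ∈ T.ker ↔ ∃ hz : z ∈ T.domain, T ⟨z, hz⟩ = 0 := by
  constructor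
  · rintro ⟨x, hx, rfl⟩
    exact ⟨x.2, hx⟩
  · rintro ⟨hz, hTz⟩
    exact ⟨⟨z, hz⟩, hTz, rfl⟩

theorem IsFormalAdjoint.apply_mem_orthogonal_ker (hsym : T.IsFormalAdjoint T) (x : T.domain) :
    T x ∈ T.kerᗮ := by
  intro z hz
  obtain ⟨hzd, hTz⟩ := mem_ker_iff.1 hz
  rw [← hsym ⟨z, hzd⟩ x, hTz, inner_zero_left]

/-- In the paper, `R = Q π₁`: an inverse of `T` on `(ker T)ᗮ`, extended by zero on `ker T`. -/
structure IsReducedInverse (T : E →ₗ.[𝕜] E) (π₀ : E → E) (R : E →L[𝕜] E) : Prop where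
  proj_mem_ker : ∀ x, π₀ x ∈ T.ker
  sub_proj_mem_orthogonal : ∀ x, x - π₀ x ∈ T.kerᗮ
  mem_domain : ∀ x, R x ∈ T.domain
  mem_orthogonal : ∀ x, R x ∈ T.kerᗮ
  apply_eq : ∀ x, T ⟨R x, mem_domain x⟩ = x - π₀ x

namespace IsReducedInverse

variable {π₀ : E → E} {R : E →L[𝕜] E}

theorem proj_eq_zero (hR : T.IsReducedInverse π₀ R) {w : E} (hw : w ∈ T.kerᗮ) : π₀ w = 0 := by
  refine (Submodule.disjoint_def.1 T.ker.orthogonal_disjoint) _ (hR.proj_mem_ker w) ?_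
  simpa using T.kerᗮ.sub_mem hw (hR.sub_proj_mem_orthogonal w)

theorem apply_of_mem_orthogonal (hR : T.IsReducedInverse π₀ R) (hsym : T.IsFormalAdjoint T)
    (x : T.domain) (hx : (x : E) ∈ T.kerᗮ) : R (T x) = x := by
  have hπ₀ : π₀ (T x) = 0 := hR.proj_eq_zero (hsym.apply_mem_orthogonal_ker x)
  have hker : (x : E) - R (T x) ∈ T.ker := by
    refine mem_ker_iff.2 ⟨T.domain.sub_mem x.2 (hR.mem_domain _), ?_⟩
    change T (x - ⟨R (T x), hR.mem_domain _⟩) = 0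
    rw [map_sub, hR.apply_eq, hπ₀, sub_zero, sub_self]
  have horth : (x : E) - R (T x) ∈ T.kerᗮ := T.kerᗮ.sub_mem hx (hR.mem_orthogonal _)
  exact (sub_eq_zero.1 (Submodule.disjoint_def.1 T.ker.orthogonal_disjoint _ hker horth)).symm

theorem injective_sub_smul (hR : T.IsReducedInverse π₀ R) (hsym : T.IsFormalAdjoint T) {μ : 𝕜}
    (hμ : μ ≠ 0) (hμR : ‖μ • R‖ < 1) :
    Function.Injective fun x : T.domain => T x - μ • (x : E) := by
  refine (injective_iff_map_eq_zero (T.toFun - μ • T.domain.subtype)).2 fun x hx => ?_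
  have hTx : T x = μ • (x : E) := sub_eq_zero.1 hx
  have hx_orth : (x : E) ∈ T.kerᗮ := by
    simpa [hTx, hμ] using T.kerᗮ.smul_mem μ⁻¹ (hsym.apply_mem_orthogonal_ker x)
  have hfix : (μ • R) x = x := by
    change μ • R x = x
    rw [← R.map_smul, ← hTx, hR.apply_of_mem_orthogonal hsym x hx_orth]
  have hle := (μ • R).le_opNorm x
  rw [hfix] at hle
  have : ‖(x : E)‖ = 0 := by nlinarith [norm_nonneg (x : E)]
  exact Subtype.ext (norm_eq_zero.1 this)

theorem surjective_sub_smul [CompleteSpace E] (hR : T.IsReducedInverse π₀ R) {μ : 𝕜}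
    (hμ : μ ≠ 0) (hμR : ‖μ • R‖ < 1) :
    Function.Surjective fun x : T.domain => T x - μ • (x : E) := by
  intro y
  set u := Units.oneSub (μ • R) hμR
  set w := (↑u⁻¹ : E →L[𝕜] E) (y - π₀ y)
  have hw : w - μ • R w = y - π₀ y := congr($u.mul_inv (y - π₀ y))
  have hw_orth : w ∈ T.kerᗮ := by
    rw [← sub_add_cancel w (μ • R w), hw]
    exact T.kerᗮ.add_mem (hR.sub_proj_mem_orthogonal y) (T.kerᗮ.smul_mem μ (hR.mem_orthogonal w))
  obtain ⟨hπ₀y, hTπ₀y⟩ := mem_ker_iff.1 (hR.proj_mem_ker y)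
  refine ⟨⟨R w, hR.mem_domain w⟩ - μ⁻¹ • ⟨π₀ y, hπ₀y⟩, ?_⟩
  simp only [map_sub, map_smul, hR.apply_eq, hR.proj_eq_zero hw_orth, hTπ₀y]
  change w - 0 - μ⁻¹ • 0 - μ • (R w - μ⁻¹ • π₀ y) = y
  rw [smul_sub, smul_smul, mul_inv_cancel₀ hμ, one_smul]
  linear_combination (norm := module) hw

end IsReducedInverse

end InnerProduct

end LinearPMap

theorem resolvent_lemma_selfadjoint_general
    (X : Type*) [NormedAddCommGroup X] [InnerProductSpace ℂ X] [CompleteSpace X]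
    (Y : Type*) [NormedAddCommGroup Y] [InnerProductSpace ℂ Y]
    (ι : Y →ₗ[ℂ] X)
    (hι_norm : ∀ y : Y, ‖ι y‖ ≤ ‖y‖)
    (T : X →ₗ.[ℂ] X)
    (hdense : Dense (T.domain : Set X))
    (hsym : ∀ x y : T.domain, ⟪T x, (y : X)⟫ = ⟪(x : X), T y⟫)
    (hYdom : ∀ y : Y, ι y ∈ T.domain)
    -- the kernel of `L` as a subspace of `X`
    (K : Submodule ℂ X)
    (hK : K = Submodule.map T.domain.subtype (LinearMap.ker T.toFun))
    -- `π₀` is the orthogonal projection onto `ker L`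
    (π₀ : X →L[ℂ] X)
    (hπ₀mem : ∀ x : X, π₀ x ∈ K)
    (hπ₀orth : ∀ x : X, x - π₀ x ∈ Kᗮ)
    -- the operator `Q`, with `L Q π₁ = π₁`, values in `Y ∩ (ker L)ᗮ`, and the `Y`-norm bound
    (Q : X →ₗ[ℂ] Y)
    (hQorth : ∀ x : X, ι (Q (x - π₀ x)) ∈ Kᗮ)
    (hLQ : ∀ x : X, T ⟨ι (Q (x - π₀ x)), hYdom _⟩ = x - π₀ x)
    (C : ℝ)
    (hQbound : ∀ x : X, ‖Q (x - π₀ x)‖ ≤ C * ‖x‖) :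
    (∃ ε > (0 : ℝ), ∀ μ : ℝ, 0 < |μ| → |μ| < ε →
      Function.Bijective (fun x : T.domain => T x - (μ : ℂ) • (x : X))) ∧
    IsSelfAdjoint T := by
  subst hK
  set R : X →L[ℂ] X := (ι ∘ₗ Q ∘ₗ (LinearMap.id - π₀.toLinearMap)).mkContinuous C
    fun x => (hι_norm _).trans (hQbound x)
  have hR : T.IsReducedInverse π₀ R := ⟨hπ₀mem, hπ₀orth, fun _ => hYdom _, hQorth, hLQ⟩
  set ε := (‖R‖ + 1)⁻¹
  have hε : 0 < ε := by positivity
  have hbij : ∀ μ : ℝ, 0 < |μ| → |μ| < ε →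
      Function.Bijective (fun x : T.domain => T x - (μ : ℂ) • (x : X)) := by
    intro μ hμ hμε
    have hμ0 : (μ : ℂ) ≠ 0 := by exact_mod_cast abs_pos.1 hμ
    have hμR : ‖(μ : ℂ) • R‖ < 1 := by
      rw [norm_smul, Complex.norm_real, Real.norm_eq_abs]
      calc |μ| * ‖R‖ ≤ |μ| * (‖R‖ + 1) := by gcongr; linarith
        _ < ε * (‖R‖ + 1) := by gcongr
        _ = 1 := inv_mul_cancel₀ (by positivity)
    exact ⟨hR.injective_sub_smul hsym hμ0 hμR, hR.surjective_sub_smul hμ0 hμR⟩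
  have hε₂ : |ε / 2| < ε := by rw [abs_of_pos (by positivity)]; linarith
  exact ⟨⟨ε, hε, hbij⟩, T.isSelfAdjoint_of_surjective_sub_smul hdense hsym (ε / 2)
    (hbij _ (by positivity) hε₂).2⟩

/-- Let `X` and `Y` be Hilbert spaces with `Y ⊆ X` (realized by an injective
linear embedding `ι : Y → X` with `‖ι y‖_X ≤ ‖y‖_Y`).  Let `L` (here `T`) be a closed symmetric
operator on `X` with dense domain `D(L)` containing `Y`.  Let `π₀` be the orthogonal projection
onto `ker L` (membership and orthogonality hypotheses below) and `π₁ = Id - π₀`.  Suppose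
`Q : X → Y` satisfies `L Q π₁ = π₁`, takes values (after `π₁`) in `(ker L)ᗮ`, and
`‖Q π₁ x‖_Y ≤ C ‖x‖_X`.  Then there is `ε > 0` such that `L - μ·Id : D(L) → X` is bijective
for every real `μ` with `0 < |μ| < ε`, and consequently `(L, D(L))` is self-adjoint. -/
theorem resolvent_lemma_selfadjoint
    (X : Type*) [NormedAddCommGroup X] [InnerProductSpace ℂ X] [CompleteSpace X]
    (Y : Type*) [NormedAddCommGroup Y] [InnerProductSpace ℂ Y] [CompleteSpace Y]
    (ι : Y →ₗ[ℂ] X) (hι_inj : Function.Injective ι)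
    (hι_norm : ∀ y : Y, ‖ι y‖ ≤ ‖y‖)
    (T : X →ₗ.[ℂ] X)
    (hdense : Dense (T.domain : Set X))
    (hsym : ∀ x y : T.domain, ⟪T x, (y : X)⟫ = ⟪(x : X), T y⟫)
    (hclosed : T.IsClosed)
    (hYdom : ∀ y : Y, ι y ∈ T.domain)
    -- the kernel of `L` as a subspace of `X`
    (K : Submodule ℂ X)
    (hK : K = Submodule.map T.domain.subtype (LinearMap.ker T.toFun))
    -- `π₀` is the orthogonal projection onto `ker L`
    (π₀ : X →L[ℂ] X)
    (hπ₀mem : ∀ x : X, π₀ x ∈ K)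
    (hπ₀orth : ∀ x : X, x - π₀ x ∈ Kᗮ)
    -- the operator `Q`, with `L Q π₁ = π₁`, values in `Y ∩ (ker L)ᗮ`, and the `Y`-norm bound
    (Q : X →ₗ[ℂ] Y)
    (hQorth : ∀ x : X, ι (Q (x - π₀ x)) ∈ Kᗮ)
    (hLQ : ∀ x : X, T ⟨ι (Q (x - π₀ x)), hYdom _⟩ = x - π₀ x)
    (C : ℝ)
    (hQbound : ∀ x : X, ‖Q (x - π₀ x)‖ ≤ C * ‖x‖) :
    (∃ ε > (0 : ℝ), ∀ μ : ℝ, 0 < |μ| → |μ| < ε →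
      Function.Bijective (fun x : T.domain => T x - (μ : ℂ) • (x : X))) ∧
    IsSelfAdjoint T :=
  resolvent_lemma_selfadjoint_general X Y ι hι_norm T hdense hsym hYdom K hK π₀ hπ₀mem hπ₀orth Q
    hQorth hLQ C hQbound
end

section
/- Under the hypotheses of the previous resolvent lemma, for 0 < |μ| < C⁻¹ the operator R_μ x = Q (∑_{j=0}^∞ (μ Q)^j π₁ x) - μ⁻¹ π₀ x is well defined (the series converges in Y), takes values in D(L), and satisfies (L - μ) R_μ x = x for every x ∈ X. -/
/-!
On `(ker L)^⊥` the map `ι ∘ Q` is a right inverse of `L` that stays in `(ker L)^⊥` and multiplies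
norms by at most `C`, so the terms of the series are bounded by `C ‖x‖ (|μ| C)^j` and the series
converges in `Y`. Since `L` is closed it may be applied termwise; as `L` undoes one factor `ι ∘ Q`,
the result is the same series shifted by one index, which gives `L (ι y) = π₁ x + μ ι y`.
Together with `L π₀ x = 0` this is `(L - μ) R_μ x = x`.
-/

local notation "⟪" x ", " y "⟫" => @inner ℂ _ _ x y

namespace LinearPMap

variable {R E F : Type*} [CommRing R] [AddCommGroup E] [AddCommGroup F] [Module R E] [Module R F]

theorem exists_apply_eq_zero_of_mem_map_ker {T : E →ₗ.[R] F} {z : E}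
    (hz : z ∈ (LinearMap.ker T.toFun).map T.domain.subtype) :
    ∃ h : z ∈ T.domain, T ⟨z, h⟩ = 0 := by
  obtain ⟨k, hk, rfl⟩ := Submodule.mem_map.mp hz
  exact ⟨k.2, hk⟩

theorem IsClosed.exists_apply_eq_of_hasSum [TopologicalSpace E] [TopologicalSpace F]
    {ι : Type*} {T : E →ₗ.[R] F} (hT : T.IsClosed) {f : ι → T.domain} {a : E} {b : F}
    (ha : HasSum (fun i ↦ (f i : E)) a) (hb : HasSum (fun i ↦ T (f i)) b) :
    ∃ h : a ∈ T.domain, T ⟨a, h⟩ = b := by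
  have hab : (a, b) ∈ T.graph :=
    hT.mem_of_tendsto (ha.prodMk hb) (.of_forall fun _ ↦ sum_mem fun i _ ↦ T.mem_graph (f i))
  obtain ⟨z, rfl, hz⟩ := T.mem_graph_iff.mp hab
  exact ⟨z.2, hz⟩

end LinearPMap

section NeumannSeries

variable {𝕜 X Y : Type*} [NormedField 𝕜] [SeminormedAddCommGroup X] [SeminormedAddCommGroup Y]
  [NormedSpace 𝕜 X] [NormedSpace 𝕜 Y] {Q : X →ₗ[𝕜] Y} {ι : Y →ₗ[𝕜] X} {C : ℝ} {u : X}

theorem norm_pow_comp_apply_le (hι : ∀ y, ‖ι y‖ ≤ ‖y‖) (hC : 0 ≤ C)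
    (hQ : ∀ j, ‖Q (((ι ∘ₗ Q) ^ j) u)‖ ≤ C * ‖((ι ∘ₗ Q) ^ j) u‖) (j : ℕ) :
    ‖((ι ∘ₗ Q) ^ j) u‖ ≤ C ^ j * ‖u‖ := by
  induction j with
  | zero => simp
  | succ j ih =>
    calc ‖((ι ∘ₗ Q) ^ (j + 1)) u‖ = ‖ι (Q (((ι ∘ₗ Q) ^ j) u))‖ := by
          rw [pow_succ', Module.End.mul_apply, LinearMap.comp_apply]
      _ ≤ C * ‖((ι ∘ₗ Q) ^ j) u‖ := (hι _).trans (hQ j)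
      _ ≤ C * (C ^ j * ‖u‖) := by gcongr
      _ = C ^ (j + 1) * ‖u‖ := by ring

theorem summable_smul_pow_comp_apply [CompleteSpace Y] (hι : ∀ y, ‖ι y‖ ≤ ‖y‖) (hC : 0 ≤ C)
    (hQ : ∀ j, ‖Q (((ι ∘ₗ Q) ^ j) u)‖ ≤ C * ‖((ι ∘ₗ Q) ^ j) u‖) {μ : 𝕜} (hμ : ‖μ‖ * C < 1) :
    Summable fun j ↦ μ ^ j • Q (((ι ∘ₗ Q) ^ j) u) := by
  refine .of_norm_bounded
    ((summable_geometric_of_lt_one (by positivity) hμ).mul_left (C * ‖u‖)) fun j ↦ ?_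
  calc ‖μ ^ j • Q (((ι ∘ₗ Q) ^ j) u)‖ = ‖μ‖ ^ j * ‖Q (((ι ∘ₗ Q) ^ j) u)‖ := by
        rw [norm_smul, norm_pow]
    _ ≤ ‖μ‖ ^ j * (C * (C ^ j * ‖u‖)) := by
        gcongr
        exact (hQ j).trans (by gcongr; exact norm_pow_comp_apply_le hι hC hQ j)
    _ = C * ‖u‖ * (‖μ‖ * C) ^ j := by ring

theorem LinearPMap.IsClosed.apply_eq_of_hasSum_smul_pow_comp_apply {T : X →ₗ.[𝕜] X}
    (hT : T.IsClosed) (hι : Continuous ι) (hdom : ∀ y, ι y ∈ T.domain)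
    (hTQ : ∀ j, T ⟨ι (Q (((ι ∘ₗ Q) ^ j) u)), hdom _⟩ = ((ι ∘ₗ Q) ^ j) u)
    {μ : 𝕜} {y : Y} (hy : HasSum (fun j ↦ μ ^ j • Q (((ι ∘ₗ Q) ^ j) u)) y) :
    T ⟨ι y, hdom y⟩ = u + μ • ι y := by
  have hιy : HasSum (fun j ↦ μ ^ j • ι (Q (((ι ∘ₗ Q) ^ j) u))) (ι y) := by
    simpa only [Function.comp_def, LinearMap.map_smul] using hy.map ι hι
  have hshift : HasSum (fun j ↦ μ ^ j • ((ι ∘ₗ Q) ^ j) u) (u + μ • ι y) := by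
    simpa only [pow_zero, one_smul, Module.End.one_apply] using HasSum.zero_add
      (f := fun j ↦ μ ^ j • ((ι ∘ₗ Q) ^ j) u) (by
        simpa only [pow_succ', mul_smul, Module.End.mul_apply, LinearMap.comp_apply]
          using hιy.const_smul μ)
  have hT_terms : ∀ j, T (μ ^ j • ⟨ι (Q (((ι ∘ₗ Q) ^ j) u)), hdom _⟩) = μ ^ j • ((ι ∘ₗ Q) ^ j) u :=
    fun j ↦ by rw [LinearPMap.map_smul, hTQ]
  obtain ⟨h, hTy⟩ := hT.exists_apply_eq_of_hasSum
    (f := fun j ↦ μ ^ j • ⟨ι (Q (((ι ∘ₗ Q) ^ j) u)), hdom _⟩)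
    (by simpa only [Submodule.coe_smul] using hιy)
    (by simpa only [hT_terms] using hshift)
  exact hTy

end NeumannSeries

theorem resolvent_series_formula_general
    (X : Type*) [NormedAddCommGroup X] [InnerProductSpace ℂ X]
    (Y : Type*) [NormedAddCommGroup Y] [InnerProductSpace ℂ Y] [CompleteSpace Y]
    (ι : Y →ₗ[ℂ] X)
    (hι_norm : ∀ y : Y, ‖ι y‖ ≤ ‖y‖)
    (T : X →ₗ.[ℂ] X)
    (hclosed : T.IsClosed)
    (hYdom : ∀ y : Y, ι y ∈ T.domain)
    (K : Submodule ℂ X)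
    (hK : K = Submodule.map T.domain.subtype (LinearMap.ker T.toFun))
    (π₀ : X →L[ℂ] X)
    (hπ₀mem : ∀ x : X, π₀ x ∈ K)
    (hπ₀orth : ∀ x : X, x - π₀ x ∈ Kᗮ)
    (Q : X →ₗ[ℂ] Y)
    (hπ₀Q : ∀ x : X, π₀ (ι (Q x)) = 0)
    (hLQ : ∀ x : X, T ⟨ι (Q (x - π₀ x)), hYdom _⟩ = x - π₀ x)
    (C : ℝ) (hC : 0 < C)
    (hQbound : ∀ x : X, ‖Q (x - π₀ x)‖ ≤ C * ‖x‖)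
    (μ : ℝ) (hμ₀ : 0 < |μ|) (hμC : |μ| < C⁻¹) :
    ∀ x : X, ∃ y : Y,
      -- the series `∑_j (μ Q)^j π₁ x`, mapped by `Q`, converges in `Y`
      HasSum (fun j : ℕ => ((μ : ℂ)) ^ j • Q (((ι ∘ₗ Q : X →ₗ[ℂ] X) ^ j) (x - π₀ x))) y ∧
      -- `R_μ x = Q(∑ ...) - μ⁻¹ π₀ x` lies in the domain of `L`
      ∃ hm : ι y - ((μ : ℂ))⁻¹ • π₀ x ∈ T.domain,
        -- and `(L - μ) R_μ x = x`
        T ⟨ι y - ((μ : ℂ))⁻¹ • π₀ x, hm⟩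
          - (μ : ℂ) • (ι y - ((μ : ℂ))⁻¹ • π₀ x) = x := by
  intro x
  have hπ₀_iterate : ∀ j, π₀ (((ι ∘ₗ Q) ^ j) (x - π₀ x)) = 0 := by
    rintro (_ | j)
    · have hperp : π₀ (x - π₀ x) ∈ Kᗮ := by
        simpa only [sub_sub_cancel] using Kᗮ.sub_mem (hπ₀orth x) (hπ₀orth (x - π₀ x))
      exact Submodule.disjoint_def.mp K.orthogonal_disjoint _ (hπ₀mem _) hperp
    · rw [pow_succ', Module.End.mul_apply, LinearMap.comp_apply]
      exact hπ₀Q _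
  have hTQ : ∀ j, T ⟨ι (Q (((ι ∘ₗ Q) ^ j) (x - π₀ x))), hYdom _⟩ = ((ι ∘ₗ Q) ^ j) (x - π₀ x) :=
    fun j ↦ by simpa only [hπ₀_iterate j, sub_zero] using hLQ (((ι ∘ₗ Q) ^ j) (x - π₀ x))
  have hQ_le : ∀ j, ‖Q (((ι ∘ₗ Q) ^ j) (x - π₀ x))‖ ≤ C * ‖((ι ∘ₗ Q) ^ j) (x - π₀ x)‖ :=
    fun j ↦ by simpa only [hπ₀_iterate j, sub_zero] using hQbound (((ι ∘ₗ Q) ^ j) (x - π₀ x))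
  have hμC' : ‖(μ : ℂ)‖ * C < 1 := by
    rwa [Complex.norm_real, Real.norm_eq_abs, ← lt_inv_mul_iff₀' hC, mul_one]
  obtain ⟨y, hy⟩ := summable_smul_pow_comp_apply hι_norm hC.le hQ_le hμC'
  have hTy := hclosed.apply_eq_of_hasSum_smul_pow_comp_apply
    (AddMonoidHomClass.continuous_of_bound ι 1 (by simpa only [one_mul] using hι_norm)) hYdom hTQ hy
  obtain ⟨hdom₀, hT₀⟩ := T.exists_apply_eq_zero_of_mem_map_ker (hK ▸ hπ₀mem x)
  have hμ : (μ : ℂ) ≠ 0 := Complex.ofReal_ne_zero.mpr (abs_pos.mp hμ₀)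
  refine ⟨y, hy, T.domain.sub_mem (hYdom y) (T.domain.smul_mem _ hdom₀), ?_⟩
  change T (⟨ι y, hYdom y⟩ - (μ : ℂ)⁻¹ • ⟨π₀ x, hdom₀⟩) - _ = x
  rw [T.map_sub, T.map_smul, hTy, hT₀, smul_zero, sub_zero, smul_sub, smul_inv_smul₀ hμ]
  abel

/-- Under the hypotheses of the resolvent lemma (Statement 1), for
`0 < |μ| < C⁻¹` the operator `R_μ x = Q (∑_{j=0}^∞ (μ Q)^j π₁ x) - μ⁻¹ π₀ x` is well
defined (the series converges in `Y`), takes values in `D(L)`, and satisfies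
`(L - μ) R_μ x = x` for every `x ∈ X`. -/
theorem resolvent_series_formula
    (X : Type*) [NormedAddCommGroup X] [InnerProductSpace ℂ X] [CompleteSpace X]
    (Y : Type*) [NormedAddCommGroup Y] [InnerProductSpace ℂ Y] [CompleteSpace Y]
    (ι : Y →ₗ[ℂ] X) (hι_inj : Function.Injective ι)
    (hι_norm : ∀ y : Y, ‖ι y‖ ≤ ‖y‖)
    (T : X →ₗ.[ℂ] X)
    (hdense : Dense (T.domain : Set X))
    (hsym : ∀ x y : T.domain, ⟪T x, (y : X)⟫ = ⟪(x : X), T y⟫)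
    (hclosed : T.IsClosed)
    (hYdom : ∀ y : Y, ι y ∈ T.domain)
    (K : Submodule ℂ X)
    (hK : K = Submodule.map T.domain.subtype (LinearMap.ker T.toFun))
    (π₀ : X →L[ℂ] X)
    (hπ₀mem : ∀ x : X, π₀ x ∈ K)
    (hπ₀orth : ∀ x : X, x - π₀ x ∈ Kᗮ)
    (Q : X →ₗ[ℂ] Y)
    (hQorth : ∀ x : X, ι (Q (x - π₀ x)) ∈ Kᗮ)
    (hπ₀Q : ∀ x : X, π₀ (ι (Q x)) = 0)
    (hLQ : ∀ x : X, T ⟨ι (Q (x - π₀ x)), hYdom _⟩ = x - π₀ x)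
    (C : ℝ) (hC : 0 < C)
    (hQbound : ∀ x : X, ‖Q (x - π₀ x)‖ ≤ C * ‖x‖)
    (μ : ℝ) (hμ₀ : 0 < |μ|) (hμC : |μ| < C⁻¹) :
    ∀ x : X, ∃ y : Y,
      -- the series `∑_j (μ Q)^j π₁ x`, mapped by `Q`, converges in `Y`
      HasSum (fun j : ℕ => ((μ : ℂ)) ^ j • Q (((ι ∘ₗ Q : X →ₗ[ℂ] X) ^ j) (x - π₀ x))) y ∧
      -- `R_μ x = Q(∑ ...) - μ⁻¹ π₀ x` lies in the domain of `L`
      ∃ hm : ι y - ((μ : ℂ))⁻¹ • π₀ x ∈ T.domain,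
        -- and `(L - μ) R_μ x = x`
        T ⟨ι y - ((μ : ℂ))⁻¹ • π₀ x, hm⟩
          - (μ : ℂ) • (ι y - ((μ : ℂ))⁻¹ • π₀ x) = x :=
  resolvent_series_formula_general X Y ι hι_norm T hclosed hYdom K hK π₀ hπ₀mem hπ₀orth Q hπ₀Q hLQ C
    hC hQbound μ hμ₀ hμC
end
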